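/- arXiv:0804.3019 — 4 statements merged into one kernel-verified Lean document; each statement's English description precedes it below -/
import Mathlib

section
/- For any real-valued random variable Z on a finite probability space with -1 < Z < 1 and E[Z] = 0, there exists a constant 0 < c < 1 (independent of Z) such that P(Z > c·E[Z²]) ≥ c·E[Z²]. -/
open Finset

attribute [local instance] Classical.propDecidable

/-- Paley–Zygmund type inequality: there is a universal constant `0 < c < 1` such that
for any real random variable `Z` on a finite probability space (uniform measure) with
`-1 < Z < 1` and mean zero, `P(Z > c·E[Z²]) ≥ c·E[Z²]`. -/
theorem paley_zygmund :
    ∃ c : ℝ, 0 < c ∧ c < 1 ∧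
      ∀ (Ω : Type) [Fintype Ω] [Nonempty Ω] (Z : Ω → ℝ),
        (∀ ω, -1 < Z ω ∧ Z ω < 1) →
        (∑ ω, Z ω) / (Fintype.card Ω : ℝ) = 0 →
        c * ((∑ ω, (Z ω) ^ 2) / (Fintype.card Ω : ℝ)) ≤
          ((Finset.univ.filter
              (fun ω => c * ((∑ ω', (Z ω') ^ 2) / (Fintype.card Ω : ℝ)) < Z ω)).card : ℝ) /
            (Fintype.card Ω : ℝ) := by
  refine ⟨1/4, by norm_num, by norm_num, ?_⟩
  intro Ω _ _ Z hZ hmean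
  have hn : (0:ℝ) < (Fintype.card Ω : ℝ) := by
    exact_mod_cast Fintype.card_pos
  set n : ℝ := (Fintype.card Ω : ℝ) with hn'
  set S : ℝ := (∑ ω, (Z ω)^2) / n with hS
  have hS0 : 0 ≤ S := by
    apply div_nonneg _ hn.le
    exact Finset.sum_nonneg fun ω _ => sq_nonneg _
  set t : ℝ := (1/4 : ℝ) * S with ht
  have ht0 : 0 ≤ t := by positivity
  -- sum of Z is zero
  have h2 : ∑ ω, Z ω = 0 := by
    rcases div_eq_zero_iff.mp hmean with h | h
    · exact h
    · exact absurd h hn.ne'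
  -- Z² ≤ |Z|
  have h1 : ∑ ω, (Z ω)^2 ≤ ∑ ω, |Z ω| := by
    apply Finset.sum_le_sum
    intro ω _
    have h := hZ ω
    have habs : |Z ω| ≤ 1 := by
      rw [abs_le]; constructor <;> linarith [h.1, h.2]
    calc (Z ω)^2 = |Z ω| * |Z ω| := by rw [← sq_abs, sq]
    _ ≤ 1 * |Z ω| := mul_le_mul_of_nonneg_right habs (abs_nonneg _)
    _ = |Z ω| := one_mul _
  -- positive part
  have h3 : ∑ ω, max (Z ω) 0 = (∑ ω, |Z ω|) / 2 := by
    have : ∀ ω : Ω, max (Z ω) 0 = (Z ω + |Z ω|) / 2 := by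
      intro ω; rw [max_def]; rcases abs_cases (Z ω) with ⟨h, _⟩ | ⟨h, _⟩ <;>
        split_ifs <;> linarith
    simp only [this]
    rw [← Finset.sum_div, Finset.sum_add_distrib, h2, zero_add]
  -- pointwise bound
  have h4 : ∀ ω : Ω, max (Z ω) 0 ≤ t + (if t < Z ω then (1:ℝ) else 0) := by
    intro ω
    by_cases h : t < Z ω
    · simp only [if_pos h]
      have := (hZ ω).2
      rcases le_or_gt (Z ω) 0 with h' | h'
      · rw [max_eq_right h'] at *; linarith
      · rw [max_eq_left h'.le]; linarith
    · simp only [if_neg h, add_zero]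
      push_neg at h
      exact max_le h ht0
  have h5 : ∑ ω, max (Z ω) 0 ≤ n * t +
      ((Finset.univ.filter (fun ω => t < Z ω)).card : ℝ) := by
    calc ∑ ω, max (Z ω) 0 ≤ ∑ ω : Ω, (t + (if t < Z ω then (1:ℝ) else 0)) :=
          Finset.sum_le_sum fun ω _ => h4 ω
    _ = n * t + ((Finset.univ.filter (fun ω => t < Z ω)).card : ℝ) := by
          rw [Finset.sum_add_distrib, Finset.sum_const, Finset.sum_boole]
          simp [hn', mul_comm]
  -- combine
  have hSn : S * n = ∑ ω, (Z ω)^2 := by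
    rw [hS]; field_simp
  have h6 : S * n / 2 ≤ n * t + ((Finset.univ.filter (fun ω => t < Z ω)).card : ℝ) := by
    rw [hSn]
    calc (∑ ω, (Z ω)^2) / 2 ≤ (∑ ω, |Z ω|) / 2 := by linarith
    _ = ∑ ω, max (Z ω) 0 := h3.symm
    _ ≤ _ := h5
  -- conclude
  show t ≤ ((Finset.univ.filter (fun ω => t < Z ω)).card : ℝ) / n
  rw [le_div_iff₀ hn]
  rw [ht] at h6 ⊢
  nlinarith
end

section
/- Let A be a subset of a finite probability space (Ω, P) and suppose there is a subset B ⊆ Ω with P(A | B) = P(A) + ν for some ν > 0. Then for the partition P_B = {B, Bᶜ} of Ω, one has E[(E(1_A | P_B))²] ≥ P(A)² + P(B)·ν². -/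
/-!
Conditioning on `{B, Bᶜ}` turns `1_A` into the function equal to `P(A ∣ B)` on `B` and to
`P(A ∣ Bᶜ)` on `Bᶜ`, whose mean is `P(A)`. Its energy is therefore `P(A)²` plus its variance,
and the variance is at least the contribution `P(B) (P(A ∣ B) - P(A))² = P(B) ν²` of the atom `B`.
-/

open Finset

attribute [local instance] Classical.propDecidable

/-- Conditional expectation of `Z` with respect to the finite partition of `Ω` whose atoms
are the fibers of `p`. -/
noncomputable def condExp {Ω ι : Type*} [Fintype Ω] (p : Ω → ι) (Z : Ω → ℝ) (ω : Ω) : ℝ :=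
  (∑ ω' ∈ Finset.univ.filter (fun ω' => p ω' = p ω), Z ω') /
    ((Finset.univ.filter (fun ω' => p ω' = p ω)).card : ℝ)

theorem sq_wmean_add_mul_sq_sub_wmean_le (b c p q : ℝ) (hb : 0 ≤ b) (hc : 0 ≤ c) :
    ((b * p + c * q) / (b + c)) ^ 2 + b / (b + c) * (p - (b * p + c * q) / (b + c)) ^ 2 ≤
      (b * p ^ 2 + c * q ^ 2) / (b + c) := by
  rcases (add_nonneg hb hc).eq_or_lt with hbc | hbc
  · rw [← hbc]; simp
  · have gap : (b * p ^ 2 + c * q ^ 2) / (b + c) -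
        (((b * p + c * q) / (b + c)) ^ 2 + b / (b + c) * (p - (b * p + c * q) / (b + c)) ^ 2) =
        c * b ^ 2 * (p - q) ^ 2 / (b + c) ^ 3 := by
      field_simp
      ring
    have : 0 ≤ c * b ^ 2 * (p - q) ^ 2 / (b + c) ^ 3 := by positivity
    linarith

theorem cast_card_mul_div_card {α : Type*} {s t : Finset α} (hst : s ⊆ t) :
    (#t : ℝ) * (#s / #t) = #s := by
  rcases t.eq_empty_or_nonempty with rfl | ht
  · simp [subset_empty.mp hst]
  · exact mul_div_cancel₀ _ (by positivity)

theorem condExp_mem_indicator {Ω : Type*} [Fintype Ω] [DecidableEq Ω] (A B : Finset Ω) (ω : Ω) :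
    condExp (· ∈ B) (fun ω' => if ω' ∈ A then (1 : ℝ) else 0) ω =
      if ω ∈ B then (#(A ∩ B) : ℝ) / #B else (#(A \ B) : ℝ) / #Bᶜ := by
  by_cases hω : ω ∈ B
  · simp [condExp, hω, inter_comm]
  · simp [condExp, hω, filter_not, sdiff_eq_inter_compl, inter_comm]

theorem sum_ite_mem_sq {Ω : Type*} [Fintype Ω] [DecidableEq Ω] (B : Finset Ω) (p q : ℝ) :
    ∑ ω, (if ω ∈ B then p else q) ^ 2 = #B * p ^ 2 + #Bᶜ * q ^ 2 := by
  simp [apply_ite (· ^ 2), sum_ite, filter_not, ← compl_eq_univ_sdiff]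

theorem energy_increment_general {Ω : Type*} [Fintype Ω] [DecidableEq Ω]
    (A B : Finset Ω) (ν : ℝ)
    (h : ((A ∩ B).card : ℝ) / (B.card : ℝ) =
      (A.card : ℝ) / (Fintype.card Ω : ℝ) + ν) :
    ((A.card : ℝ) / (Fintype.card Ω : ℝ)) ^ 2 +
        ((B.card : ℝ) / (Fintype.card Ω : ℝ)) * ν ^ 2 ≤
      (∑ ω, (condExp (fun ω' => ω' ∈ B)
          (fun ω' => if ω' ∈ A then (1 : ℝ) else 0) ω) ^ 2) / (Fintype.card Ω : ℝ) := by
  have hcard : (#B : ℝ) + #Bᶜ = Fintype.card Ω := by exact_mod_cast card_add_card_compl B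
  have hmean : (#B : ℝ) * (#(A ∩ B) / #B) + #Bᶜ * (#(A \ B) / #Bᶜ) = #A := by
    rw [cast_card_mul_div_card inter_subset_right,
      cast_card_mul_div_card fun x hx => mem_compl.2 (mem_sdiff.1 hx).2]
    exact_mod_cast card_inter_add_card_sdiff A B
  have hν_eq : ν = #(A ∩ B) / #B - #A / Fintype.card Ω := by linarith
  simp only [condExp_mem_indicator, sum_ite_mem_sq]
  have := sq_wmean_add_mul_sq_sub_wmean_le (#B : ℝ) #Bᶜ (#(A ∩ B) / #B) (#(A \ B) / #Bᶜ)
    (Nat.cast_nonneg _) (Nat.cast_nonneg _)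
  rwa [hmean, hcard, ← hν_eq] at this

/-- Energy increment: if `P(A ∣ B) = P(A) + ν` with `ν > 0`, then conditioning on the
two-element partition `{B, Bᶜ}` increases the energy of the indicator of `A` by at least
`P(B)·ν²`. -/
theorem energy_increment {Ω : Type*} [Fintype Ω] [Nonempty Ω] [DecidableEq Ω]
    (A B : Finset Ω) (hB : 0 < B.card) (ν : ℝ) (hν : 0 < ν)
    (h : ((A ∩ B).card : ℝ) / (B.card : ℝ) =
      (A.card : ℝ) / (Fintype.card Ω : ℝ) + ν) :
    ((A.card : ℝ) / (Fintype.card Ω : ℝ)) ^ 2 +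
        ((B.card : ℝ) / (Fintype.card Ω : ℝ)) * ν ^ 2 ≤
      (∑ ω, (condExp (fun ω' => ω' ∈ B)
          (fun ω' => if ω' ∈ A then (1 : ℝ) else 0) ω) ^ 2) / (Fintype.card Ω : ℝ) :=
  energy_increment_general A B ν h
end

section
/- (Gowers–Cauchy–Schwarz in two dimensions) For finite nonempty sets X, Y and functions f_{00}, f_{01}, f_{10}, f_{11} : X × Y → ℝ, one has |E_{x,x' ∈ X, y,y' ∈ Y} f_{00}(x,y) f_{01}(x,y') f_{10}(x',y) f_{11}(x',y')| ≤ ‖f_{00}‖_□ · ‖f_{01}‖_□ · ‖f_{10}‖_□ · ‖f_{11}‖_□, where ‖f‖_□ = (E_{x,x',y,y'} f(x,y)f(x,y')f(x',y)f(x',y'))^{1/4}. -/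
open Finset

/-- The two-dimensional Gowers box norm
`‖f‖_□ = (E_{x,x',y,y'} f(x,y)f(x,y')f(x',y)f(x',y'))^{1/4}`. -/
noncomputable def boxNorm {X Y : Type*} [Fintype X] [Fintype Y] (f : X → Y → ℝ) : ℝ :=
  ((∑ x, ∑ x', ∑ y, ∑ y', f x y * f x y' * f x' y * f x' y') /
      ((Fintype.card X : ℝ) ^ 2 * (Fintype.card Y : ℝ) ^ 2)) ^ ((1 : ℝ) / 4)

/-!
Grouping by the pair `(x, x')` writes the Gowers inner product `⟨f₀₀, f₀₁, f₁₀, f₁₁⟩` as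
`∑_{x,x'} (∑_y f₀₀(x,y) f₁₀(x',y)) (∑_{y'} f₀₁(x,y') f₁₁(x',y'))`, so by Cauchy–Schwarz its square
is at most `⟨f₀₀, f₀₀, f₁₀, f₁₀⟩ ⟨f₀₁, f₀₁, f₁₁, f₁₁⟩`. With the roles of `X` and `Y` exchanged, the
same argument bounds `⟨f, f, g, g⟩²` by `⟨f, f, f, f⟩ ⟨g, g, g, g⟩`, which is `‖f‖_□⁴ ‖g‖_□⁴` up to
normalisation; the two steps together give the fourth power of the inequality.
-/

open Function

section BoxSum

variable {X Y R : Type*} [Fintype X] [Fintype Y]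

/-- The Gowers inner product of four functions on `X × Y`, without the normalising factor. -/
def boxSum [CommSemiring R] (f₀₀ f₀₁ f₁₀ f₁₁ : X → Y → R) : R :=
  ∑ x, ∑ x', ∑ y, ∑ y', f₀₀ x y * f₀₁ x y' * f₁₀ x' y * f₁₁ x' y'

section CommSemiring

variable [CommSemiring R]

theorem boxSum_eq_sum_mul_sum (f₀₀ f₀₁ f₁₀ f₁₁ : X → Y → R) :
    boxSum f₀₀ f₀₁ f₁₀ f₁₁ =
      ∑ p : X × X, (∑ y, f₀₀ p.1 y * f₁₀ p.2 y) * ∑ y', f₀₁ p.1 y' * f₁₁ p.2 y' := by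
  simp only [boxSum, Fintype.sum_prod_type, sum_mul_sum]
  exact sum_congr rfl fun _ _ => sum_congr rfl fun _ _ => sum_congr rfl fun _ _ =>
    sum_congr rfl fun _ _ => by ring

theorem boxSum_eq_sum_sq (f g : X → Y → R) :
    boxSum f f g g = ∑ p : X × X, (∑ y, f p.1 y * g p.2 y) ^ 2 := by
  simp only [boxSum_eq_sum_mul_sum, sq]

theorem boxSum_swap (f₀₀ f₀₁ f₁₀ f₁₁ : X → Y → R) :
    boxSum (swap f₀₀) (swap f₁₀) (swap f₀₁) (swap f₁₁) = boxSum f₀₀ f₀₁ f₁₀ f₁₁ := by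
  -- this instance of `sum_comm` only fires on an `X`-sum directly outside a `Y`-sum, so it
  -- terminates with both `Y`-sums moved outward
  simp_rw [boxSum, swap, sum_comm (s := (univ : Finset Y)) (t := (univ : Finset X)),
    mul_right_comm _ (f₀₁ _ _)]

end CommSemiring

section OrderedCommSemiring

variable [CommSemiring R] [LinearOrder R] [IsStrictOrderedRing R] [ExistsAddOfLE R]

theorem boxSum_nonneg (f g : X → Y → R) : 0 ≤ boxSum f f g g := by
  rw [boxSum_eq_sum_sq]
  exact sum_nonneg fun _ _ => sq_nonneg _

theorem boxSum_sq_le (f₀₀ f₀₁ f₁₀ f₁₁ : X → Y → R) :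
    boxSum f₀₀ f₀₁ f₁₀ f₁₁ ^ 2 ≤ boxSum f₀₀ f₀₀ f₁₀ f₁₀ * boxSum f₀₁ f₀₁ f₁₁ f₁₁ := by
  rw [boxSum_eq_sum_sq, boxSum_eq_sum_sq, boxSum_eq_sum_mul_sum]
  exact sum_mul_sq_le_sq_mul_sq _ _ _

theorem boxSum_sq_le_swap (f g : X → Y → R) :
    boxSum f f g g ^ 2 ≤ boxSum f f f f * boxSum g g g g := by
  simpa only [boxSum_swap] using boxSum_sq_le (swap f) (swap g) (swap f) (swap g)

theorem boxSum_pow_four_le (f₀₀ f₀₁ f₁₀ f₁₁ : X → Y → R) :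
    boxSum f₀₀ f₀₁ f₁₀ f₁₁ ^ 4 ≤
      boxSum f₀₀ f₀₀ f₀₀ f₀₀ * boxSum f₀₁ f₀₁ f₀₁ f₀₁ *
        boxSum f₁₀ f₁₀ f₁₀ f₁₀ * boxSum f₁₁ f₁₁ f₁₁ f₁₁ := by
  calc boxSum f₀₀ f₀₁ f₁₀ f₁₁ ^ 4 = (boxSum f₀₀ f₀₁ f₁₀ f₁₁ ^ 2) ^ 2 := by ring
    _ ≤ (boxSum f₀₀ f₀₀ f₁₀ f₁₀ * boxSum f₀₁ f₀₁ f₁₁ f₁₁) ^ 2 :=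
      pow_le_pow_left₀ (sq_nonneg _) (boxSum_sq_le _ _ _ _) 2
    _ = boxSum f₀₀ f₀₀ f₁₀ f₁₀ ^ 2 * boxSum f₀₁ f₀₁ f₁₁ f₁₁ ^ 2 := mul_pow _ _ 2
    _ ≤ (boxSum f₀₀ f₀₀ f₀₀ f₀₀ * boxSum f₁₀ f₁₀ f₁₀ f₁₀) *
          (boxSum f₀₁ f₀₁ f₀₁ f₀₁ * boxSum f₁₁ f₁₁ f₁₁ f₁₁) :=
      mul_le_mul (boxSum_sq_le_swap _ _) (boxSum_sq_le_swap _ _) (sq_nonneg _)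
        (mul_nonneg (boxSum_nonneg _ _) (boxSum_nonneg _ _))
    _ = _ := by ring

end OrderedCommSemiring

end BoxSum

theorem Real.le_mul_rpow_quarter_of_pow_four_le {t a b c d : ℝ} (ht : 0 ≤ t) (ha : 0 ≤ a)
    (hb : 0 ≤ b) (hc : 0 ≤ c) (hd : 0 ≤ d) (h : t ^ 4 ≤ a * b * c * d) :
    t ≤ a ^ ((1 : ℝ) / 4) * b ^ ((1 : ℝ) / 4) * c ^ ((1 : ℝ) / 4) * d ^ ((1 : ℝ) / 4) := by
  have hroot : t ≤ (a * b * c * d) ^ ((1 : ℝ) / 4) := by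
    rw [one_div, Real.le_rpow_inv_iff_of_pos ht (by positivity) (by norm_num)]
    exact_mod_cast h
  rwa [Real.mul_rpow (by positivity) hd, Real.mul_rpow (by positivity) hc,
    Real.mul_rpow ha hb] at hroot

theorem gowers_cauchy_schwarz_2d_general {X Y : Type*} [Fintype X] [Fintype Y]
    (f₀₀ f₀₁ f₁₀ f₁₁ : X → Y → ℝ) :
    |(∑ x, ∑ x', ∑ y, ∑ y', f₀₀ x y * f₀₁ x y' * f₁₀ x' y * f₁₁ x' y') /
        ((Fintype.card X : ℝ) ^ 2 * (Fintype.card Y : ℝ) ^ 2)| ≤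
      boxNorm f₀₀ * boxNorm f₀₁ * boxNorm f₁₀ * boxNorm f₁₁ := by
  set D : ℝ := (Fintype.card X : ℝ) ^ 2 * (Fintype.card Y : ℝ) ^ 2
  have hD : 0 ≤ D := by positivity
  refine Real.le_mul_rpow_quarter_of_pow_four_le (abs_nonneg _)
    (div_nonneg (boxSum_nonneg f₀₀ f₀₀) hD) (div_nonneg (boxSum_nonneg f₀₁ f₀₁) hD)
    (div_nonneg (boxSum_nonneg f₁₀ f₁₀) hD) (div_nonneg (boxSum_nonneg f₁₁ f₁₁) hD) ?_
  calc |boxSum f₀₀ f₀₁ f₁₀ f₁₁ / D| ^ 4 = boxSum f₀₀ f₀₁ f₁₀ f₁₁ ^ 4 / D ^ 4 := by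
        rw [pow_abs, abs_of_nonneg (by positivity), div_pow]
    _ ≤ boxSum f₀₀ f₀₀ f₀₀ f₀₀ * boxSum f₀₁ f₀₁ f₀₁ f₀₁ *
          boxSum f₁₀ f₁₀ f₁₀ f₁₀ * boxSum f₁₁ f₁₁ f₁₁ f₁₁ / D ^ 4 := by
        gcongr
        exact boxSum_pow_four_le f₀₀ f₀₁ f₁₀ f₁₁
    _ = boxSum f₀₀ f₀₀ f₀₀ f₀₀ / D * (boxSum f₀₁ f₀₁ f₀₁ f₀₁ / D) *
          (boxSum f₁₀ f₁₀ f₁₀ f₁₀ / D) * (boxSum f₁₁ f₁₁ f₁₁ f₁₁ / D) := by ring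

/-- Gowers–Cauchy–Schwarz inequality in two dimensions. -/
theorem gowers_cauchy_schwarz_2d {X Y : Type*} [Fintype X] [Fintype Y]
    [Nonempty X] [Nonempty Y] (f₀₀ f₀₁ f₁₀ f₁₁ : X → Y → ℝ) :
    |(∑ x, ∑ x', ∑ y, ∑ y', f₀₀ x y * f₀₁ x y' * f₁₀ x' y * f₁₁ x' y') /
        ((Fintype.card X : ℝ) ^ 2 * (Fintype.card Y : ℝ) ^ 2)| ≤
      boxNorm f₀₀ * boxNorm f₀₁ * boxNorm f₁₀ * boxNorm f₁₁ :=
  gowers_cauchy_schwarz_2d_general f₀₀ f₀₁ f₁₀ f₁₁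
end

section
/- (Uniform sets behave randomly for products, two-dimensional corner count) Let X, Y, Z be finite nonempty sets and let S₁ ⊆ Y × Z, S₂ ⊆ X × Z, S₃ ⊆ X × Y. Then |E_{x∈X,y∈Y,z∈Z} 1_{S₁}(y,z)·1_{S₂}(x,z)·1_{S₃}(x,y) − P(S₁)·P(S₂)·P(S₃)| ≤ 8·max over the three sets of ‖1_S − P(S)‖_□, where each box norm is taken over the corresponding product of two sets. -/
/-!
Replace each indicator `a_i` by its density `p_i` one factor at a time:
`a₁a₂a₃ - p₁p₂p₃ = (a₁ - p₁)a₂a₃ + p₁(a₂ - p₂)a₃ + p₁p₂(a₃ - p₃)`.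
A corner count in which one factor is `g` and the other two are bounded by `1` is at most
`‖g‖_□` in absolute value, by Cauchy–Schwarz twice: over `(x, y)` to remove the factor on
`X × Y`, then over pairs `(z, z')` to remove the factor on `X × Z`, leaving the box norm of the
factor on `Y × Z`. This yields the constant `3`, which is below `8`.
-/

open Finset

section BoxNorm

variable {X Y : Type*} [Fintype X] [Fintype Y]

lemma sum_box_eq_sum_sum_sq (f : X → Y → ℝ) :
    ∑ x, ∑ x', ∑ y, ∑ y', f x y * f x y' * f x' y * f x' y' =
      ∑ y, ∑ y', (∑ x, f x y * f x y') ^ 2 := by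
  simp_rw [sq, sum_mul_sum, sum_comm (s := (univ : Finset X)) (t := (univ : Finset Y))]
  refine sum_congr rfl fun y _ => sum_congr rfl fun y' _ =>
    sum_congr rfl fun x _ => sum_congr rfl fun x' _ => by ring

lemma boxNorm_nonneg (f : X → Y → ℝ) : 0 ≤ boxNorm f := by
  rw [boxNorm, sum_box_eq_sum_sum_sq]
  positivity

lemma boxNorm_pow_four (f : X → Y → ℝ) :
    boxNorm f ^ 4 = (∑ y, ∑ y', (∑ x, f x y * f x y') ^ 2) /
      ((Fintype.card X : ℝ) ^ 2 * (Fintype.card Y : ℝ) ^ 2) := by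
  rw [boxNorm, sum_box_eq_sum_sum_sq, ← Real.rpow_natCast, ← Real.rpow_mul (by positivity)]
  norm_num

end BoxNorm

lemma sq_sum_sum_mul_le {ι κ : Type*} [Fintype ι] [Fintype κ] (f g : ι → κ → ℝ) {c : ℝ}
    (hf : ∀ i j, |f i j| ≤ c) :
    (∑ i, ∑ j, f i j * g i j) ^ 2 ≤
      Fintype.card ι * Fintype.card κ * c ^ 2 * ∑ i, ∑ j, g i j ^ 2 := by
  simp only [← Fintype.sum_prod_type']
  calc _ ≤ (∑ p : ι × κ, f p.1 p.2 ^ 2) * ∑ p : ι × κ, g p.1 p.2 ^ 2 :=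
        sum_mul_sq_le_sq_mul_sq _ _ _
    _ ≤ (∑ _p : ι × κ, c ^ 2) * ∑ p : ι × κ, g p.1 p.2 ^ 2 := by
        refine mul_le_mul_of_nonneg_right (sum_le_sum fun p _ => ?_) (by positivity)
        exact sq_le_sq' (abs_le.mp (hf _ _)).1 (abs_le.mp (hf _ _)).2
    _ = _ := by simp [Fintype.card_prod]

section Corner

variable {X Y Z : Type*} [Fintype X] [Fintype Y] [Fintype Z]

def cornerSum (g₁ : Y → Z → ℝ) (g₂ : X → Z → ℝ) (g₃ : X → Y → ℝ) : ℝ :=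
  ∑ x, ∑ y, ∑ z, g₁ y z * g₂ x z * g₃ x y

lemma cornerSum_eq_cornerSum_swap (g₁ : Y → Z → ℝ) (g₂ : X → Z → ℝ) (g₃ : X → Y → ℝ) :
    cornerSum g₁ g₂ g₃ = cornerSum g₂ g₁ (flip g₃) := by
  rw [cornerSum, cornerSum, sum_comm]
  exact sum_congr rfl fun y _ => sum_congr rfl fun x _ => sum_congr rfl fun z _ => by
    simp only [flip]; ring

lemma cornerSum_eq_cornerSum_cycle (g₁ : Y → Z → ℝ) (g₂ : X → Z → ℝ) (g₃ : X → Y → ℝ) :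
    cornerSum g₁ g₂ g₃ = cornerSum g₃ (flip g₁) (flip g₂) := by
  rw [cornerSum, cornerSum, sum_comm_cycle]
  exact sum_congr rfl fun z _ => sum_congr rfl fun x _ => sum_congr rfl fun y _ => by
    simp only [flip]; ring

lemma cornerSum_const (p₁ p₂ p₃ : ℝ) :
    cornerSum (X := X) (Y := Y) (Z := Z) (fun _ _ => p₁) (fun _ _ => p₂) (fun _ _ => p₃) =
      Fintype.card X * Fintype.card Y * Fintype.card Z * (p₁ * p₂ * p₃) := by
  simp only [cornerSum, sum_const, card_univ, nsmul_eq_mul]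
  ring

lemma cornerSum_sub_cornerSum (a₁ b₁ : Y → Z → ℝ) (a₂ b₂ : X → Z → ℝ) (a₃ b₃ : X → Y → ℝ) :
    cornerSum a₁ a₂ a₃ - cornerSum b₁ b₂ b₃ =
      cornerSum (fun y z => a₁ y z - b₁ y z) a₂ a₃ +
        cornerSum b₁ (fun x z => a₂ x z - b₂ x z) a₃ +
        cornerSum b₁ b₂ (fun x y => a₃ x y - b₃ x y) := by
  simp only [cornerSum, ← sum_sub_distrib, ← sum_add_distrib]
  exact sum_congr rfl fun x _ => sum_congr rfl fun y _ => sum_congr rfl fun z _ => by ring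

theorem abs_cornerSum_le [Nonempty Y] [Nonempty Z]
    (g₁ : Y → Z → ℝ) (g₂ : X → Z → ℝ) (g₃ : X → Y → ℝ)
    (h₂ : ∀ x z, |g₂ x z| ≤ 1) (h₃ : ∀ x y, |g₃ x y| ≤ 1) :
    |cornerSum g₁ g₂ g₃| ≤
      Fintype.card X * Fintype.card Y * Fintype.card Z * boxNorm g₁ := by
  set A : ℝ := (Fintype.card X : ℝ)
  set B : ℝ := (Fintype.card Y : ℝ)
  set C : ℝ := (Fintype.card Z : ℝ)
  set h : X → Y → ℝ := fun x y => ∑ z, g₁ y z * g₂ x z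
  set W := ∑ x, ∑ y, h x y ^ 2
  set U := ∑ z, ∑ z', (∑ y, g₁ y z * g₁ y z') ^ 2
  have first_cs : cornerSum g₁ g₂ g₃ ^ 2 ≤ A * B * W := by
    have hS : cornerSum g₁ g₂ g₃ = ∑ x, ∑ y, g₃ x y * h x y := by
      simp only [cornerSum, h, mul_sum]
      exact sum_congr rfl fun x _ => sum_congr rfl fun y _ => sum_congr rfl fun z _ => by ring
    simpa [hS] using sq_sum_sum_mul_le g₃ h h₃
  have hW : W = ∑ z, ∑ z', (∑ x, g₂ x z * g₂ x z') * ∑ y, g₁ y z * g₁ y z' := by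
    simp_rw [W, h, sq, sum_mul_sum, sum_comm (s := (univ : Finset Y)) (t := (univ : Finset Z)),
      sum_comm (s := (univ : Finset X)) (t := (univ : Finset Z))]
    exact sum_congr rfl fun z _ => sum_congr rfl fun z' _ =>
      sum_congr rfl fun x _ => sum_congr rfl fun y _ => by ring
  have second_cs : W ^ 2 ≤ C * C * A ^ 2 * U := by
    refine hW ▸ sq_sum_sum_mul_le _ _ fun z z' => ?_
    calc |∑ x, g₂ x z * g₂ x z'| ≤ ∑ x, |g₂ x z * g₂ x z'| := abs_sum_le_sum_abs _ _
      _ ≤ ∑ _x : X, (1 : ℝ) := sum_le_sum fun x _ => by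
          rw [abs_mul]; exact mul_le_one₀ (h₂ x z) (abs_nonneg _) (h₂ x z')
      _ = A := by simp [A]
  have hU : U = boxNorm g₁ ^ 4 * (B ^ 2 * C ^ 2) := by
    rw [boxNorm_pow_four, div_mul_cancel₀ _ (by positivity)]
  refine le_of_pow_le_pow_left₀ four_ne_zero (by positivity [boxNorm_nonneg g₁]) ?_
  calc |cornerSum g₁ g₂ g₃| ^ 4 = (cornerSum g₁ g₂ g₃ ^ 2) ^ 2 := by
        rw [show 4 = 2 * 2 from rfl, pow_mul, sq_abs]
    _ ≤ (A * B * W) ^ 2 := pow_le_pow_left₀ (sq_nonneg _) first_cs 2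
    _ = (A * B) ^ 2 * W ^ 2 := by ring
    _ ≤ (A * B) ^ 2 * (C * C * A ^ 2 * U) := by gcongr
    _ = (A * B * C * boxNorm g₁) ^ 4 := by rw [hU]; ring

theorem abs_cornerSum_le_of_second [Nonempty X] [Nonempty Z]
    (g₁ : Y → Z → ℝ) (g₂ : X → Z → ℝ) (g₃ : X → Y → ℝ)
    (h₁ : ∀ y z, |g₁ y z| ≤ 1) (h₃ : ∀ x y, |g₃ x y| ≤ 1) :
    |cornerSum g₁ g₂ g₃| ≤
      Fintype.card X * Fintype.card Y * Fintype.card Z * boxNorm g₂ := by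
  rw [cornerSum_eq_cornerSum_swap]
  convert abs_cornerSum_le g₂ g₁ (flip g₃) h₁ (fun y x => h₃ x y) using 1
  ring

theorem abs_cornerSum_le_of_third [Nonempty X] [Nonempty Y]
    (g₁ : Y → Z → ℝ) (g₂ : X → Z → ℝ) (g₃ : X → Y → ℝ)
    (h₁ : ∀ y z, |g₁ y z| ≤ 1) (h₂ : ∀ x z, |g₂ x z| ≤ 1) :
    |cornerSum g₁ g₂ g₃| ≤
      Fintype.card X * Fintype.card Y * Fintype.card Z * boxNorm g₃ := by
  rw [cornerSum_eq_cornerSum_cycle]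
  convert abs_cornerSum_le g₃ (flip g₁) (flip g₂) (fun z y => h₁ y z) (fun z x => h₂ x z)
    using 1
  ring

theorem abs_cornerSum_sub_const_le [Nonempty X] [Nonempty Y] [Nonempty Z]
    (a₁ : Y → Z → ℝ) (a₂ : X → Z → ℝ) (a₃ : X → Y → ℝ) {p₁ p₂ p₃ : ℝ}
    (ha₂ : ∀ x z, |a₂ x z| ≤ 1) (ha₃ : ∀ x y, |a₃ x y| ≤ 1) (hp₁ : |p₁| ≤ 1) (hp₂ : |p₂| ≤ 1) :
    |cornerSum a₁ a₂ a₃ - Fintype.card X * Fintype.card Y * Fintype.card Z * (p₁ * p₂ * p₃)| ≤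
      Fintype.card X * Fintype.card Y * Fintype.card Z *
        (boxNorm (fun y z => a₁ y z - p₁) + boxNorm (fun x z => a₂ x z - p₂) +
          boxNorm (fun x y => a₃ x y - p₃)) := by
  rw [← cornerSum_const, cornerSum_sub_cornerSum, mul_add, mul_add]
  refine (abs_add_three _ _ _).trans (add_le_add_three ?_ ?_ ?_)
  · exact abs_cornerSum_le _ _ _ ha₂ ha₃
  · exact abs_cornerSum_le_of_second _ _ _ (fun _ _ => hp₁) ha₃
  · exact abs_cornerSum_le_of_third _ _ _ (fun _ _ => hp₁) (fun _ _ => hp₂)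

end Corner

lemma abs_card_div_card_mul_card_le_one {α β : Type*} [Fintype α] [Fintype β]
    (s : Finset (α × β)) :
    |(s.card : ℝ) / (Fintype.card α * Fintype.card β)| ≤ 1 := by
  rw [abs_of_nonneg (by positivity)]
  refine div_le_one_of_le₀ ?_ (by positivity)
  exact_mod_cast (card_le_univ s).trans_eq (Fintype.card_prod α β)

lemma abs_ite_one_zero_le_one (P : Prop) [Decidable P] : |if P then (1 : ℝ) else 0| ≤ 1 := by
  split_ifs <;> simp

/-- Uniform sets behave randomly for the two-dimensional corner-counting product: the
trilinear count for `S₁ ⊆ Y × Z`, `S₂ ⊆ X × Z`, `S₃ ⊆ X × Y` differs from the product of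
densities by at most `8` times the largest box norm of the balanced indicator functions. -/
theorem uniform_product_count {X Y Z : Type*} [Fintype X] [Fintype Y] [Fintype Z]
    [Nonempty X] [Nonempty Y] [Nonempty Z]
    [DecidableEq X] [DecidableEq Y] [DecidableEq Z]
    (S₁ : Finset (Y × Z)) (S₂ : Finset (X × Z)) (S₃ : Finset (X × Y)) :
    |(∑ x, ∑ y, ∑ z,
          (if (y, z) ∈ S₁ then (1 : ℝ) else 0) * (if (x, z) ∈ S₂ then (1 : ℝ) else 0) *
            (if (x, y) ∈ S₃ then (1 : ℝ) else 0)) /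
        ((Fintype.card X : ℝ) * (Fintype.card Y : ℝ) * (Fintype.card Z : ℝ)) -
      ((S₁.card : ℝ) / ((Fintype.card Y : ℝ) * (Fintype.card Z : ℝ))) *
        ((S₂.card : ℝ) / ((Fintype.card X : ℝ) * (Fintype.card Z : ℝ))) *
        ((S₃.card : ℝ) / ((Fintype.card X : ℝ) * (Fintype.card Y : ℝ)))| ≤
    8 * max (max
        (boxNorm (fun y z => (if (y, z) ∈ S₁ then (1 : ℝ) else 0) -
          (S₁.card : ℝ) / ((Fintype.card Y : ℝ) * (Fintype.card Z : ℝ))))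
        (boxNorm (fun x z => (if (x, z) ∈ S₂ then (1 : ℝ) else 0) -
          (S₂.card : ℝ) / ((Fintype.card X : ℝ) * (Fintype.card Z : ℝ)))))
        (boxNorm (fun x y => (if (x, y) ∈ S₃ then (1 : ℝ) else 0) -
          (S₃.card : ℝ) / ((Fintype.card X : ℝ) * (Fintype.card Y : ℝ)))) := by
  set D : ℝ := (Fintype.card X : ℝ) * (Fintype.card Y : ℝ) * (Fintype.card Z : ℝ)
  have hD : 0 < D := by positivity
  have hdev := abs_cornerSum_sub_const_le (fun y z => if (y, z) ∈ S₁ then (1 : ℝ) else 0)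
    (fun x z => if (x, z) ∈ S₂ then (1 : ℝ) else 0) (fun x y => if (x, y) ∈ S₃ then (1 : ℝ) else 0)
    (fun _ _ => abs_ite_one_zero_le_one _) (fun _ _ => abs_ite_one_zero_le_one _)
    (abs_card_div_card_mul_card_le_one S₁) (abs_card_div_card_mul_card_le_one S₂)
    (p₃ := (S₃.card : ℝ) / ((Fintype.card X : ℝ) * (Fintype.card Y : ℝ)))
  have normalize {a b c : ℝ} (h : |a - D * b| ≤ D * c) : |a / D - b| ≤ c := by
    rwa [show a / D - b = (a - D * b) / D by field_simp, abs_div, abs_of_pos hD, div_le_iff₀' hD]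
  have sum_le_max {b₁ b₂ b₃ : ℝ} (hb₁ : 0 ≤ b₁) : b₁ + b₂ + b₃ ≤ 8 * max (max b₁ b₂) b₃ := by
    linarith [le_max_left (max b₁ b₂) b₃, le_max_right (max b₁ b₂) b₃, le_max_left b₁ b₂,
      le_max_right b₁ b₂]
  exact (normalize hdev).trans (sum_le_max (boxNorm_nonneg _))
end
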